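/- arXiv:1711.00389 — 3 statements merged into one kernel-verified Lean document; each statement's English description precedes it below -/
import Mathlib

section
/- Let α, β ∈ ℂ, r > 0, κ > 0, and for z ∈ ℂ write θ(z) = ϑ₁(z/(πr); iκ). Then for all complex numbers ℓ, k, n, m the identity θ(n−ℓ+m−k)·θ(α+m+k+n)·θ(β+n+ℓ+m)·θ(α−β+m−n) = θ(m−k)·θ(α+m+k+ℓ)·θ(β+2n+m)·θ(α−β+m−ℓ) + θ(n−ℓ)·θ(α+n+2m)·θ(β+n+ℓ+k)·θ(α−β+k−n) holds. -/
open scoped Real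

/-- The Jacobi theta function `ϑ₁(v; τ)`, defined by its series
`ϑ₁(v; τ) = 2 ∑_{n=1}^∞ (−1)^{n−1} exp(πiτ(n−1/2)²) sin((2n−1)πv)`
(reindexed over `n : ℕ` starting from `0`). -/
noncomputable def theta1 (v τ : ℂ) : ℂ :=
  2 * ∑' n : ℕ, (-1 : ℂ) ^ n * Complex.exp (π * Complex.I * τ * ((n : ℂ) + 1 / 2) ^ 2) *
    Complex.sin ((2 * (n : ℂ) + 1) * π * v)

/-- `θ(z) = ϑ₁(z/(πr); iκ)`. -/
noncomputable def thetaR (r κ : ℝ) (z : ℂ) : ℂ :=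
  theta1 (z / (π * r)) (Complex.I * κ)

/-!
Write `ϑ₁(v; τ) = -i ∑_{n ∈ ℤ} (-1)ⁿ exp(πiτ(n + 1/2)² + 2πi(n + 1/2)v)`. A product of four such
series is a sum over `p = m + 1/2 ∈ (ℤ + 1/2)⁴` of `(-1)^{Σm} exp(πiτ|p|² + 2πi p·v)`, which
we split according to the parity of `Σm`. The two substitutions of arguments on the right-hand
side are `v ↦ Av` and `v ↦ Bv` for symmetric orthogonal matrices `A`, `B` with entries `±1/2`,
and `p·(Av) = (Ap)·v`, `|Ap| = |p|`. The matrix `A` permutes the even half-integer points and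
maps the odd ones onto the integer points of odd coordinate sum; `B` maps the even half-integer
points onto those same integer points, with the opposite sign, and permutes the odd ones. So the
integer-point sums cancel and the two products on the right add up to the even plus the odd part
of the left.
-/

open Complex

noncomputable def theta1Term (v τ : ℂ) (n : ℤ) : ℂ :=
  cexp (π * I * n + π * I * τ * (n + 1 / 2) ^ 2 + 2 * π * I * (n + 1 / 2) * v)

lemma theta1Term_eq_mul_jacobiTheta₂_term (v τ : ℂ) (n : ℤ) :
    theta1Term v τ n =
      cexp (π * I * τ / 4 + π * I * v) * jacobiTheta₂_term n (v + 1 / 2 + τ / 2) τ := by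
  rw [theta1Term, jacobiTheta₂_term, ← Complex.exp_add]
  ring_nf

lemma summable_norm_theta1Term (v : ℂ) {τ : ℂ} (hτ : 0 < τ.im) :
    Summable fun n ↦ ‖theta1Term v τ n‖ := by
  simp only [theta1Term_eq_mul_jacobiTheta₂_term, norm_mul]
  exact ((summable_jacobiTheta₂_term_iff _ _).mpr hτ).norm.mul_left _

lemma neg_I_mul_theta1Term_add_theta1Term_neg (v τ : ℂ) (n : ℕ) :
    -I * (theta1Term v τ n + theta1Term v τ (-(n + 1))) =
      2 * ((-1) ^ n * cexp (π * I * τ * (n + 1 / 2) ^ 2) * Complex.sin ((2 * n + 1) * π * v)) := by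
  have hsign : (-1 : ℂ) ^ n = cexp (π * I * n) := by
    rw [mul_comm, Complex.exp_nat_mul, Complex.exp_pi_mul_I]
  have hpos : theta1Term v τ n = cexp (π * I * n) * cexp (π * I * τ * (n + 1 / 2) ^ 2) *
      cexp (2 * π * I * (n + 1 / 2) * v) := by
    rw [theta1Term, Complex.exp_add, Complex.exp_add]
    push_cast
    rfl
  have hneg : theta1Term v τ (-(n + 1)) = -(cexp (π * I * n) *
      cexp (π * I * τ * (n + 1 / 2) ^ 2) * (cexp (2 * π * I * (n + 1 / 2) * v))⁻¹) := by
    rw [theta1Term, ← Complex.exp_neg, ← Complex.exp_add, ← Complex.exp_add,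
      ← neg_one_mul (cexp _), ← Complex.exp_pi_mul_I, ← Complex.exp_add,
      Complex.exp_eq_exp_iff_exists_int]
    exact ⟨-n - 1, by push_cast; ring⟩
  have hsin : Complex.sin ((2 * n + 1) * π * v) =
      ((cexp (2 * π * I * (n + 1 / 2) * v))⁻¹ - cexp (2 * π * I * (n + 1 / 2) * v)) * I / 2 := by
    rw [Complex.sin, ← Complex.exp_neg]
    ring_nf
  rw [hpos, hneg, hsin, hsign]
  ring

lemma theta1_eq_neg_I_mul_tsum (v : ℂ) {τ : ℂ} (hτ : 0 < τ.im) :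
    theta1 v τ = -I * ∑' n : ℤ, theta1Term v τ n := by
  rw [← tsum_nat_add_neg_add_one (summable_norm_theta1Term v hτ).of_norm, ← tsum_mul_left,
    theta1, ← tsum_mul_left]
  exact tsum_congr fun n ↦ (neg_I_mul_theta1Term_add_theta1Term_neg v τ n).symm

noncomputable def theta1ProdTerm (τ v₁ v₂ v₃ v₄ : ℂ) (m : ℤ × ℤ × ℤ × ℤ) : ℂ :=
  theta1Term v₁ τ m.1 *
    (theta1Term v₂ τ m.2.1 * (theta1Term v₃ τ m.2.2.1 * theta1Term v₄ τ m.2.2.2))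

section ProductSeries

variable {τ : ℂ} (v₁ v₂ v₃ v₄ : ℂ)

lemma summable_norm_theta1Term_mul₃ (hτ : 0 < τ.im) :
    Summable fun y : ℤ × ℤ × ℤ ↦
      ‖theta1Term v₂ τ y.1 * (theta1Term v₃ τ y.2.1 * theta1Term v₄ τ y.2.2)‖ :=
  ((summable_norm_theta1Term v₂ hτ).mul_norm
    ((summable_norm_theta1Term v₃ hτ).mul_norm (summable_norm_theta1Term v₄ hτ)) :)

lemma summable_norm_theta1ProdTerm (hτ : 0 < τ.im) :
    Summable fun m ↦ ‖theta1ProdTerm τ v₁ v₂ v₃ v₄ m‖ :=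
  ((summable_norm_theta1Term v₁ hτ).mul_norm (summable_norm_theta1Term_mul₃ v₂ v₃ v₄ hτ) :)

lemma theta1_mul_theta1_mul_theta1_mul_theta1 (hτ : 0 < τ.im) :
    theta1 v₁ τ * theta1 v₂ τ * theta1 v₃ τ * theta1 v₄ τ =
      ∑' m, theta1ProdTerm τ v₁ v₂ v₃ v₄ m := by
  have hs (v : ℂ) := summable_norm_theta1Term v hτ
  rw [tsum_congr fun m ↦ theta1ProdTerm.eq_def τ v₁ v₂ v₃ v₄ m,
    ← tsum_mul_tsum_of_summable_norm (hs v₁) (summable_norm_theta1Term_mul₃ v₂ v₃ v₄ hτ),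
    ← tsum_mul_tsum_of_summable_norm (hs v₂) ((hs v₃).mul_norm (hs v₄)),
    ← tsum_mul_tsum_of_summable_norm (hs v₃) (hs v₄)]
  simp only [theta1_eq_neg_I_mul_tsum _ hτ]
  ring_nf
  rw [I_pow_four, one_mul]

end ProductSeries

def parityEquiv : (ℤ × ℤ × ℤ × ℤ) ⊕ (ℤ × ℤ × ℤ × ℤ) ≃ ℤ × ℤ × ℤ × ℤ where
  toFun
    | .inl (a, b, c, d) => (a, b, c, a + b + c + 2 * d)
    | .inr (a, b, c, d) => (a, b, c, a + b + c + 2 * d + 1)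
  invFun
    | (a, b, c, e) =>
      if (e - a - b - c) % 2 = 0 then .inl (a, b, c, (e - a - b - c) / 2)
      else .inr (a, b, c, (e - a - b - c) / 2)
  left_inv := by
    rintro (⟨a, b, c, d⟩ | ⟨a, b, c, d⟩) <;> dsimp only <;> split_ifs <;> grind
  right_inv := by
    rintro ⟨a, b, c, e⟩
    dsimp only
    split_ifs <;> grind

lemma tsum_eq_tsum_parityEquiv_inl_add_tsum_parityEquiv_inr {E : Type*} [NormedAddCommGroup E]
    [CompleteSpace E] {f : ℤ × ℤ × ℤ × ℤ → E} (hf : Summable f) :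
    ∑' m, f m = ∑' x, f (parityEquiv (.inl x)) + ∑' x, f (parityEquiv (.inr x)) := by
  have hf' := parityEquiv.summable_iff.mpr hf
  rw [← parityEquiv.tsum_eq]
  exact Summable.tsum_sum (hf'.comp_injective Sum.inl_injective)
    (hf'.comp_injective Sum.inr_injective)

/- The maps `p ↦ Ap` and `p ↦ Bp` between the lattice points described above, written in the
coordinates of `parityEquiv`. -/
def evenEquivA : ℤ × ℤ × ℤ × ℤ ≃ ℤ × ℤ × ℤ × ℤ where
  toFun | (a, b, c, d) => (b + c + d, a + c + d, a + b + d, -a - b - c - 2 * d)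
  invFun | (a, b, c, d) => (b + c + d, a + c + d, a + b + d, -a - b - c - 2 * d)
  left_inv := by rintro ⟨a, b, c, d⟩; grind
  right_inv := by rintro ⟨a, b, c, d⟩; grind

def oddEquivA : ℤ × ℤ × ℤ × ℤ ≃ ℤ × ℤ × ℤ × ℤ where
  toFun | (a, b, c, d) => (b + c + d + 1, a + c + d + 1, a + b + d + 1, -a - b - c - 2 * d - 2)
  invFun | (a, b, c, d) => (b + c + d, a + c + d, a + b + d, -a - b - c - 2 * d - 1)
  left_inv := by rintro ⟨a, b, c, d⟩; grind
  right_inv := by rintro ⟨a, b, c, d⟩; grind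

def evenEquivB : ℤ × ℤ × ℤ × ℤ ≃ ℤ × ℤ × ℤ × ℤ where
  toFun | (a, b, c, d) => (-c - d, a + b + c + d + 1, -a - d, d - 1)
  invFun | (a, b, c, d) => (-c - d - 1, a + b + c + d, -a - d - 1, d + 1)
  left_inv := by rintro ⟨a, b, c, d⟩; grind
  right_inv := by rintro ⟨a, b, c, d⟩; grind

def oddEquivB : ℤ × ℤ × ℤ × ℤ ≃ ℤ × ℤ × ℤ × ℤ where
  toFun | (a, b, c, d) => (-c - d - 1, a + b + c + d + 1, -a - d - 1, d)
  invFun | (a, b, c, d) => (-c - d - 1, a + b + c + d + 1, -a - d - 1, d)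
  left_inv := by rintro ⟨a, b, c, d⟩; grind
  right_inv := by rintro ⟨a, b, c, d⟩; grind

noncomputable def jacobiTheta₂ProdTerm (τ v₁ v₂ v₃ v₄ : ℂ) (m : ℤ × ℤ × ℤ × ℤ) : ℂ :=
  jacobiTheta₂_term m.1 v₁ τ * (jacobiTheta₂_term m.2.1 v₂ τ *
    (jacobiTheta₂_term m.2.2.1 v₃ τ * jacobiTheta₂_term m.2.2.2 v₄ τ))

section LatticeTransformations

variable (τ v₁ v₂ v₃ v₄ : ℂ)

lemma tsum_even_theta1ProdTerm_transformA :
    ∑' x, theta1ProdTerm τ ((-v₁ + v₂ + v₃ + v₄) / 2) ((v₁ - v₂ + v₃ + v₄) / 2)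
        ((v₁ + v₂ - v₃ + v₄) / 2) ((v₁ + v₂ + v₃ - v₄) / 2) (parityEquiv (.inl x)) =
      ∑' x, theta1ProdTerm τ v₁ v₂ v₃ v₄ (parityEquiv (.inl x)) := by
  refine (tsum_congr fun x ↦ ?_).trans
    (evenEquivA.tsum_eq fun y ↦ theta1ProdTerm τ v₁ v₂ v₃ v₄ (parityEquiv (.inl y)))
  obtain ⟨a, b, c, d⟩ := x
  simp only [theta1ProdTerm, theta1Term, parityEquiv, evenEquivA, Equiv.coe_fn_mk,
    ← Complex.exp_add]
  congr 1
  push_cast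
  ring

lemma tsum_odd_theta1ProdTerm_transformA :
    ∑' x, theta1ProdTerm τ ((-v₁ + v₂ + v₃ + v₄) / 2) ((v₁ - v₂ + v₃ + v₄) / 2)
        ((v₁ + v₂ - v₃ + v₄) / 2) ((v₁ + v₂ + v₃ - v₄) / 2) (parityEquiv (.inr x)) =
      -∑' x, jacobiTheta₂ProdTerm τ v₁ v₂ v₃ v₄ (parityEquiv (.inr x)) := by
  rw [← tsum_neg]
  refine (tsum_congr fun x ↦ ?_).trans
    (oddEquivA.tsum_eq fun y ↦ -jacobiTheta₂ProdTerm τ v₁ v₂ v₃ v₄ (parityEquiv (.inr y)))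
  obtain ⟨a, b, c, d⟩ := x
  simp only [theta1ProdTerm, theta1Term, jacobiTheta₂ProdTerm, jacobiTheta₂_term, parityEquiv,
    oddEquivA, Equiv.coe_fn_mk, ← Complex.exp_add]
  rw [← neg_one_mul (cexp _), ← Complex.exp_pi_mul_I, ← Complex.exp_add,
    Complex.exp_eq_exp_iff_exists_int]
  exact ⟨a + b + c + d, by push_cast; ring⟩

lemma tsum_even_theta1ProdTerm_transformB :
    ∑' x, theta1ProdTerm τ ((v₁ + v₂ - v₃ - v₄) / 2) ((v₁ + v₂ + v₃ + v₄) / 2)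
        ((-v₁ + v₂ + v₃ - v₄) / 2) ((-v₁ + v₂ - v₃ + v₄) / 2) (parityEquiv (.inl x)) =
      ∑' x, jacobiTheta₂ProdTerm τ v₁ v₂ v₃ v₄ (parityEquiv (.inr x)) := by
  refine (tsum_congr fun x ↦ ?_).trans
    (evenEquivB.tsum_eq fun y ↦ jacobiTheta₂ProdTerm τ v₁ v₂ v₃ v₄ (parityEquiv (.inr y)))
  obtain ⟨a, b, c, d⟩ := x
  simp only [theta1ProdTerm, theta1Term, jacobiTheta₂ProdTerm, jacobiTheta₂_term, parityEquiv,
    evenEquivB, Equiv.coe_fn_mk, ← Complex.exp_add]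
  rw [Complex.exp_eq_exp_iff_exists_int]
  exact ⟨a + b + c + d, by push_cast; ring⟩

lemma tsum_odd_theta1ProdTerm_transformB :
    ∑' x, theta1ProdTerm τ ((v₁ + v₂ - v₃ - v₄) / 2) ((v₁ + v₂ + v₃ + v₄) / 2)
        ((-v₁ + v₂ + v₃ - v₄) / 2) ((-v₁ + v₂ - v₃ + v₄) / 2) (parityEquiv (.inr x)) =
      ∑' x, theta1ProdTerm τ v₁ v₂ v₃ v₄ (parityEquiv (.inr x)) := by
  refine (tsum_congr fun x ↦ ?_).trans
    (oddEquivB.tsum_eq fun y ↦ theta1ProdTerm τ v₁ v₂ v₃ v₄ (parityEquiv (.inr y)))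
  obtain ⟨a, b, c, d⟩ := x
  simp only [theta1ProdTerm, theta1Term, parityEquiv, oddEquivB, Equiv.coe_fn_mk,
    ← Complex.exp_add]
  rw [Complex.exp_eq_exp_iff_exists_int]
  exact ⟨a + c + d + 1, by push_cast; ring⟩

end LatticeTransformations

theorem theta1_riemann_relation {τ : ℂ} (hτ : 0 < τ.im) (v₁ v₂ v₃ v₄ : ℂ) :
    theta1 v₁ τ * theta1 v₂ τ * theta1 v₃ τ * theta1 v₄ τ =
      theta1 ((-v₁ + v₂ + v₃ + v₄) / 2) τ * theta1 ((v₁ - v₂ + v₃ + v₄) / 2) τ *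
          theta1 ((v₁ + v₂ - v₃ + v₄) / 2) τ * theta1 ((v₁ + v₂ + v₃ - v₄) / 2) τ +
        theta1 ((v₁ + v₂ - v₃ - v₄) / 2) τ * theta1 ((v₁ + v₂ + v₃ + v₄) / 2) τ *
          theta1 ((-v₁ + v₂ + v₃ - v₄) / 2) τ * theta1 ((-v₁ + v₂ - v₃ + v₄) / 2) τ := by
  have split (w₁ w₂ w₃ w₄ : ℂ) := tsum_eq_tsum_parityEquiv_inl_add_tsum_parityEquiv_inr
    (summable_norm_theta1ProdTerm w₁ w₂ w₃ w₄ hτ).of_norm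
  simp only [theta1_mul_theta1_mul_theta1_mul_theta1 _ _ _ _ hτ]
  rw [split, split, split, tsum_even_theta1ProdTerm_transformA, tsum_odd_theta1ProdTerm_transformA,
    tsum_even_theta1ProdTerm_transformB, tsum_odd_theta1ProdTerm_transformB]
  ring

theorem theta_addition_formula_general (r κ : ℝ) (hκ : 0 < κ) (α β ℓ k n m : ℂ) :
    thetaR r κ (n - ℓ + m - k) * thetaR r κ (α + m + k + n) * thetaR r κ (β + n + ℓ + m) *
        thetaR r κ (α - β + m - n)
      = thetaR r κ (m - k) * thetaR r κ (α + m + k + ℓ) * thetaR r κ (β + 2 * n + m) *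
          thetaR r κ (α - β + m - ℓ)
        + thetaR r κ (n - ℓ) * thetaR r κ (α + n + 2 * m) * thetaR r κ (β + n + ℓ + k) *
            thetaR r κ (α - β + k - n) := by
  have hτ : 0 < (I * κ).im := by simpa using hκ
  have h := theta1_riemann_relation hτ ((n - ℓ + m - k) / (π * r)) ((α + m + k + n) / (π * r))
    ((β + n + ℓ + m) / (π * r)) ((α - β + m - n) / (π * r))
  simp only [thetaR]
  -- puts the arguments `(±z₁ ± z₂ ± z₃ ± z₄) / 2 / (π * r)` and `(±z₁ / (π * r) ± …) / 2` of
  -- `theta1` into the same normal form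
  ring_nf at h ⊢
  linear_combination h

/-- The four-term addition formula for theta functions (special case used in the
proof of Theorem 2.1). -/
theorem theta_addition_formula (r κ : ℝ) (hr : 0 < r) (hκ : 0 < κ) (α β ℓ k n m : ℂ) :
    thetaR r κ (n - ℓ + m - k) * thetaR r κ (α + m + k + n) * thetaR r κ (β + n + ℓ + m) *
        thetaR r κ (α - β + m - n)
      = thetaR r κ (m - k) * thetaR r κ (α + m + k + ℓ) * thetaR r κ (β + 2 * n + m) *
          thetaR r κ (α - β + m - ℓ)
        + thetaR r κ (n - ℓ) * thetaR r κ (α + n + 2 * m) * thetaR r κ (β + n + ℓ + k) *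
            thetaR r κ (α - β + k - n) :=
  theta_addition_formula_general r κ hκ α β ℓ k n m
end

section
/- Let T ∈ ℕ with T ≥ 1, r > 0, α₀ ∈ ℝ, and set λ = (3T−1)/(2πr). Assume (B1) 0 ≤ λ < 1/2 and (B2) πλ < α₀/r < π(1−λ). Then for every (t,x) ∈ Λ*_{2T}: sin(η₁) ≠ 0 and the simplified trigonometric elementary weight q̃(t,x) = sin(ζ₁)/sin(η₁) is a strictly positive real number, where ζ₁ = (2α₀ − (3T+1) + (3t−x))/(2r) and η₁ = (2α₀ − (3T+1) + (t+x))/(2r); consequently the simplified trigonometric excursion measure P̃^{0,0}_{2T} is a probability measure. -/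
open scoped Real

/-! On `Λ*_{2T}` both `t + x` and `3t - x` lie in `[2, 6T]`. Condition (B2) says exactly that
`3T - 1 < 2α₀ < 2πr - (3T - 1)`, which puts `2α₀ - (3T + 1) + s` in `(0, 2πr)` for every such `s`;
hence both `ζ₁` and `η₁` lie in `(0, π)` and both sines are positive. -/

/-- The region `Λ*_{2T}` of spatio-temporal points that can carry a rightward step. -/
def LambdaStar (T : ℕ) : Set (ℤ × ℤ) :=
  {p | Even (p.1 + p.2) ∧
    ((1 ≤ p.1 ∧ p.1 ≤ (T : ℤ) ∧ -p.1 + 2 ≤ p.2 ∧ p.2 ≤ p.1) ∨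
     ((T : ℤ) + 1 ≤ p.1 ∧ p.1 ≤ 2 * (T : ℤ) ∧ p.1 - 2 * (T : ℤ) ≤ p.2 ∧
       p.2 ≤ -p.1 + 2 * (T : ℤ)))}

theorem bounds_of_mem_LambdaStar {T : ℕ} {t x : ℤ} (h : (t, x) ∈ LambdaStar T) :
    (2 ≤ t + x ∧ t + x ≤ 2 * T) ∧ (2 ≤ 3 * t - x ∧ 3 * t - x ≤ 6 * T) := by
  rcases h.2 with ⟨_, _, _, _⟩ | ⟨_, _, _, _⟩ <;> omega

theorem two_mul_mem_Ioo_of_pi_mul_lt_div_lt {r α c : ℝ} (hr : 0 < r)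
    (h : π * (c / (2 * π * r)) < α / r ∧ α / r < π * (1 - c / (2 * π * r))) :
    c < 2 * α ∧ 2 * α < 2 * π * r - c := by
  have hpi : π * (c / (2 * π * r)) = c / (2 * r) := by field_simp
  rw [mul_sub, mul_one, hpi] at h
  obtain ⟨h₁, h₂⟩ := h
  have h2r : 0 < 2 * r := by positivity
  have e₁ : c / (2 * r) * (2 * r) = c := by field_simp
  have e₂ : α / r * (2 * r) = 2 * α := by field_simp
  have e₃ : (π - c / (2 * r)) * (2 * r) = 2 * π * r - c := by field_simp
  constructor
  · simpa only [e₁, e₂] using mul_lt_mul_of_pos_right h₁ h2r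
  · simpa only [e₂, e₃] using mul_lt_mul_of_pos_right h₂ h2r

theorem sin_pos_of_two_mul_mem_Ioo {r α T s : ℝ} (hr : 0 < r)
    (hα : 3 * T - 1 < 2 * α ∧ 2 * α < 2 * π * r - (3 * T - 1)) (hs₀ : 2 ≤ s) (hs₁ : s ≤ 6 * T) :
    0 < Real.sin ((2 * α - (3 * T + 1) + s) / (2 * r)) := by
  apply Real.sin_pos_of_pos_of_lt_pi
  · exact div_pos (by linarith) (by positivity)
  · rw [div_lt_iff₀ (by positivity)]
    linarith

theorem simplified_trigonometric_weight_positive_general (T : ℕ) (r α₀ : ℝ)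
    (hr : 0 < r) (lam : ℝ) (hlam : lam = (3 * (T : ℝ) - 1) / (2 * π * r))
    (hB2 : π * lam < α₀ / r ∧ α₀ / r < π * (1 - lam)) :
    ∀ t x : ℤ, (t, x) ∈ LambdaStar T →
      Real.sin ((2 * α₀ - (3 * (T : ℝ) + 1) + ((t : ℝ) + (x : ℝ))) / (2 * r)) ≠ 0 ∧
      0 < Real.sin ((2 * α₀ - (3 * (T : ℝ) + 1) + (3 * (t : ℝ) - (x : ℝ))) / (2 * r)) /
          Real.sin ((2 * α₀ - (3 * (T : ℝ) + 1) + ((t : ℝ) + (x : ℝ))) / (2 * r)) := by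
  intro t x hmem
  subst hlam
  have hα := two_mul_mem_Ioo_of_pi_mul_lt_div_lt hr hB2
  obtain ⟨⟨hη₀, hη₁⟩, hζ₀, hζ₁⟩ := bounds_of_mem_LambdaStar hmem
  have hη := sin_pos_of_two_mul_mem_Ioo hr hα (s := (t : ℝ) + x)
    (by exact_mod_cast hη₀) (by exact_mod_cast (by omega : t + x ≤ 6 * T))
  have hζ := sin_pos_of_two_mul_mem_Ioo hr hα (s := 3 * (t : ℝ) - x)
    (by exact_mod_cast hζ₀) (by exact_mod_cast hζ₁)
  exact ⟨hη.ne', div_pos hζ hη⟩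

/-- Corollary 5.3: positivity conditions for the simplified trigonometric
elementary weight `q̃(t,x) = sin ζ₁ / sin η₁`, hence for the simplified
trigonometric excursion measure. -/
theorem simplified_trigonometric_weight_positive (T : ℕ) (hT : 1 ≤ T) (r α₀ : ℝ)
    (hr : 0 < r) (lam : ℝ) (hlam : lam = (3 * (T : ℝ) - 1) / (2 * π * r))
    (hB1 : 0 ≤ lam ∧ lam < 1 / 2)
    (hB2 : π * lam < α₀ / r ∧ α₀ / r < π * (1 - lam)) :
    ∀ t x : ℤ, (t, x) ∈ LambdaStar T →
      Real.sin ((2 * α₀ - (3 * (T : ℝ) + 1) + ((t : ℝ) + (x : ℝ))) / (2 * r)) ≠ 0 ∧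
      0 < Real.sin ((2 * α₀ - (3 * (T : ℝ) + 1) + (3 * (t : ℝ) - (x : ℝ))) / (2 * r)) /
          Real.sin ((2 * α₀ - (3 * (T : ℝ) + 1) + ((t : ℝ) + (x : ℝ))) / (2 * r)) :=
  simplified_trigonometric_weight_positive_general T r α₀ hr lam hlam hB2
end

section
/- The limit lim_{T→∞} [−(1/T) · ∑_{n=1}^{T} log cos((2n−T−1)π/(6T))] = log 2 − (3/π) · ∑_{n=1}^∞ (−1)^{n−1} sin(nπ/3)/n² holds, where T ranges over positive integers. -/
open scoped Real Topology
open Filter MeasureTheory Finset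

/-!
The mean `(1/T) ∑ log cos ((2n - T - 1)π / (6T))` is `3 / π` times the midpoint Riemann sum of
`log ∘ cos` for `T` equal subintervals of `[-π/6, π/6]`, so it tends to
`(3 / π) ∫_{-π/6}^{π/6} log cos`. To evaluate the integral, expand
`log ‖1 + r e^{2ix}‖ = ∑ (-1)^{n+1} rⁿ cos (2nx) / n` for `|r| < 1` and integrate termwise.
As `r → 1⁻` the integrals converge by dominated convergence, since
`(1 + r) |cos x| ≤ ‖1 + r e^{2ix}‖` keeps the integrand away from the singularity of `log`, and
the series converge by Abel's theorem; at `r = 1`, `‖1 + e^{2ix}‖ = 2 cos x`.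
-/

noncomputable def riemannSum (f : ℝ → ℝ) (a b θ : ℝ) (T : ℕ) : ℝ :=
  (b - a) / T * ∑ i ∈ range T, f (a + (i + θ) * ((b - a) / T))

theorem abs_mul_sub_integral_le {f : ℝ → ℝ} {u v t ε : ℝ} (huv : u ≤ v)
    (hf : IntervalIntegrable f volume u v) (hε : ∀ x ∈ Set.Icc u v, |f t - f x| ≤ ε) :
    |(v - u) * f t - ∫ x in u..v, f x| ≤ ε * (v - u) := by
  rw [← smul_eq_mul, ← intervalIntegral.integral_const,
    ← intervalIntegral.integral_sub intervalIntegrable_const hf]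
  calc |∫ x in u..v, (f t - f x)| ≤ ε * |v - u| :=
        intervalIntegral.norm_integral_le_of_norm_le_const (E := ℝ) fun x hx =>
          hε x (Set.uIcc_of_le huv ▸ Set.uIoc_subset_uIcc hx)
    _ = ε * (v - u) := by rw [abs_of_nonneg (sub_nonneg.2 huv)]

theorem abs_riemannSum_sub_integral_le {f : ℝ → ℝ} {a b θ ε : ℝ} {T : ℕ} (hab : a ≤ b)
    (hθ : θ ∈ Set.Icc 0 1) (hT : T ≠ 0) (hf : IntervalIntegrable f volume a b)
    (hε : ∀ x ∈ Set.Icc a b, ∀ y ∈ Set.Icc a b, |x - y| ≤ (b - a) / T → |f x - f y| ≤ ε) :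
    |riemannSum f a b θ T - ∫ x in a..b, f x| ≤ ε * (b - a) := by
  set h := (b - a) / T with h_def
  have hh : 0 ≤ h := div_nonneg (sub_nonneg.2 hab) T.cast_nonneg
  have hTh : T * h = b - a := by rw [h_def]; field_simp
  set p : ℕ → ℝ := fun i => a + i * h with hp
  have hp_step : ∀ i, p (i + 1) = p i + h := fun i => by simp only [hp]; push_cast; ring
  have hp_mem : ∀ i < T, Set.Icc (p i) (p (i + 1)) ⊆ Set.Icc a b := by
    intro i hi y hy
    have hi' : (i : ℝ) + 1 ≤ T := by exact_mod_cast hi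
    refine ⟨le_trans ?_ hy.1, hy.2.trans ?_⟩
    · simp only [hp]; nlinarith [(i.cast_nonneg : (0 : ℝ) ≤ i)]
    · simp only [hp]; push_cast; nlinarith
  have hint : ∀ i < T, IntervalIntegrable f volume (p i) (p (i + 1)) := fun i hi =>
    hf.mono_set (by
      rw [Set.uIcc_of_le (by rw [hp_step]; linarith), Set.uIcc_of_le hab]; exact hp_mem i hi)
  have hpiece : ∀ i ∈ range T,
      |h * f (a + (i + θ) * h) - ∫ x in p i..p (i + 1), f x| ≤ ε * h := by
    intro i hi
    have hi := mem_range.1 hi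
    have htag : a + (i + θ) * h ∈ Set.Icc (p i) (p (i + 1)) := by
      rw [hp_step]; simp only [hp]; constructor <;> nlinarith [hθ.1, hθ.2]
    have := abs_mul_sub_integral_le (by rw [hp_step]; linarith) (hint i hi) fun x hx =>
      hε _ (hp_mem i hi htag) x (hp_mem i hi hx) (by
        rw [hp_step] at hx htag
        exact abs_le.2 ⟨by linarith [hx.2, htag.1], by linarith [hx.1, htag.2]⟩)
    simpa only [hp_step, add_sub_cancel_left] using this
  calc |riemannSum f a b θ T - ∫ x in a..b, f x|
      = |∑ i ∈ range T, (h * f (a + (i + θ) * h) - ∫ x in p i..p (i + 1), f x)| := by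
        rw [sum_sub_distrib, intervalIntegral.sum_integral_adjacent_intervals hint,
          show p 0 = a by simp [hp], show p T = b by simp only [hp]; rw [hTh]; ring,
          riemannSum, ← h_def, mul_sum]
    _ ≤ ∑ i ∈ range T, ε * h := (abs_sum_le_sum_abs _ _).trans (sum_le_sum hpiece)
    _ = ε * (b - a) := by rw [sum_const, card_range, nsmul_eq_mul, ← hTh]; ring

theorem tendsto_riemannSum {f : ℝ → ℝ} {a b θ : ℝ} (hab : a ≤ b) (hθ : θ ∈ Set.Icc 0 1)
    (hf : ContinuousOn f (Set.Icc a b)) :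
    Tendsto (riemannSum f a b θ) atTop (𝓝 (∫ x in a..b, f x)) := by
  rw [Metric.tendsto_atTop]
  intro ε hε
  have hε' : 0 < ε / (b - a + 1) := by have := sub_nonneg.2 hab; positivity
  obtain ⟨δ, hδ, hfδ⟩ := Metric.uniformContinuousOn_iff.1
    (isCompact_Icc.uniformContinuousOn_of_continuous hf) _ hε'
  obtain ⟨N, hN⟩ := exists_nat_gt ((b - a) / δ)
  refine ⟨N + 1, fun T hT => ?_⟩
  have hT' : (N : ℝ) + 1 ≤ T := by exact_mod_cast hT
  have hstep : (b - a) / T < δ := by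
    rw [div_lt_iff₀ (by linarith [N.cast_nonneg (α := ℝ)])]
    rw [div_lt_iff₀ hδ] at hN
    nlinarith
  rw [Real.dist_eq]
  refine (abs_riemannSum_sub_integral_le hab hθ (by omega) (hf.intervalIntegrable_of_Icc hab)
    fun x hx y hy hxy => (hfδ x hx y hy (by rw [Real.dist_eq]; linarith)).le).trans_lt ?_
  rw [div_mul_eq_mul_div, div_lt_iff₀ (by linarith)]
  nlinarith

theorem abs_le_abs_of_mem_uIcc_neg {a x : ℝ} (hx : x ∈ Set.uIcc (-a) a) : |x| ≤ |a| := by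
  rw [Set.mem_uIcc] at hx
  rw [abs_le]
  rcases hx with hx | hx <;> constructor <;> linarith [neg_abs_le a, le_abs_self a]

theorem cos_pos_of_mem_uIcc_neg {a x : ℝ} (ha : |a| < π / 2) (hx : x ∈ Set.uIcc (-a) a) :
    0 < Real.cos x :=
  Real.cos_pos_of_mem_Ioo (abs_lt.1 ((abs_le_abs_of_mem_uIcc_neg hx).trans_lt ha))

theorem abs_log_le_log_sub_log {m M y : ℝ} (hm : 0 < m) (hm1 : m ≤ 1) (hM : 1 ≤ M)
    (hmy : m ≤ y) (hyM : y ≤ M) : |Real.log y| ≤ Real.log M - Real.log m := by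
  have hlogm := Real.log_nonpos hm.le hm1
  have hlogM := Real.log_nonneg hM
  rw [abs_le]
  constructor
  · linarith [Real.log_le_log hm hmy]
  · linarith [Real.log_le_log (hm.trans_le hmy) hyM]

theorem continuousOn_log_cos {a : ℝ} (ha : |a| < π / 2) :
    ContinuousOn (fun x => Real.log (Real.cos x)) (Set.uIcc (-a) a) := fun _ hx =>
  ((Real.continuousAt_log (cos_pos_of_mem_uIcc_neg ha hx).ne').comp
    Real.continuous_cos.continuousAt).continuousWithinAt

theorem norm_one_add_mul_exp_sq (r x : ℝ) :
    ‖1 + r * Complex.exp (↑(2 * x) * Complex.I)‖ ^ 2 = (1 - r) ^ 2 + 4 * r * Real.cos x ^ 2 := by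
  rw [Complex.sq_norm, Complex.normSq_apply]
  simp only [Complex.add_re, Complex.add_im, Complex.one_re, Complex.one_im,
    Complex.re_ofReal_mul, Complex.im_ofReal_mul, Complex.exp_ofReal_mul_I_re,
    Complex.exp_ofReal_mul_I_im, Real.cos_two_mul, Real.sin_two_mul]
  linear_combination (4 * r ^ 2 * Real.cos x ^ 2) * Real.sin_sq_add_cos_sq x

theorem abs_one_add_mul_abs_cos_le_norm (r x : ℝ) :
    |1 + r| * |Real.cos x| ≤ ‖1 + r * Complex.exp (↑(2 * x) * Complex.I)‖ := by
  refine (pow_le_pow_iff_left₀ (by positivity) (norm_nonneg _) two_ne_zero).1 ?_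
  rw [norm_one_add_mul_exp_sq, mul_pow, sq_abs, sq_abs]
  nlinarith [mul_nonneg (sq_nonneg (1 - r)) (sub_nonneg.2 (Real.cos_sq_le_one x))]

theorem norm_one_add_exp (x : ℝ) :
    ‖1 + Complex.exp (↑(2 * x) * Complex.I)‖ = 2 * |Real.cos x| := by
  have h := norm_one_add_mul_exp_sq 1 x
  rw [Complex.ofReal_one, one_mul] at h
  rw [← sq_eq_sq₀ (norm_nonneg _) (by positivity), h, mul_pow, sq_abs]
  ring

theorem hasSum_log_norm_one_add_mul_exp {r : ℝ} (hr : |r| < 1) (θ : ℝ) :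
    HasSum (fun n : ℕ => (-1) ^ (n + 1) * r ^ n / n * Real.cos (n * θ))
      (Real.log ‖1 + r * Complex.exp (θ * Complex.I)‖) := by
  have hz : ‖(r : ℂ) * Complex.exp (θ * Complex.I)‖ < 1 := by
    rwa [norm_mul, Complex.norm_exp_ofReal_mul_I, mul_one, Complex.norm_real, Real.norm_eq_abs]
  have h := Complex.reCLM.hasSum (Complex.hasSum_taylorSeries_log hz)
  rw [Complex.reCLM_apply, Complex.log_re] at h
  convert h using 2 with n
  have hterm : (-1) ^ (n + 1) * ((r : ℂ) * Complex.exp (θ * Complex.I)) ^ n / n =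
      ((-1) ^ (n + 1) * r ^ n / n : ℝ) * Complex.exp ((n * θ : ℝ) * Complex.I) := by
    rw [mul_pow, ← Complex.exp_nat_mul]
    push_cast
    ring_nf
  rw [Complex.reCLM_apply, hterm, Complex.re_ofReal_mul, Complex.exp_ofReal_mul_I_re]

theorem integral_cos_mul_symm {c : ℝ} (hc : c ≠ 0) (a : ℝ) :
    ∫ x in -a..a, Real.cos (c * x) = 2 * Real.sin (c * a) / c := by
  rw [intervalIntegral.integral_comp_mul_left _ hc, integral_cos, mul_neg, Real.sin_neg,
    smul_eq_mul]
  field_simp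
  ring

theorem hasSum_integral_log_norm_one_add_mul_exp {r : ℝ} (hr : |r| < 1) (a : ℝ) :
    HasSum (fun n : ℕ => (-1) ^ (n + 1) * Real.sin (2 * n * a) / n ^ 2 * r ^ n)
      (∫ x in -a..a, Real.log ‖1 + r * Complex.exp (↑(2 * x) * Complex.I)‖) := by
  have hterm : ∀ n : ℕ, ∫ x in -a..a, (-1) ^ (n + 1) * r ^ n / n * Real.cos (n * (2 * x)) =
      (-1) ^ (n + 1) * Real.sin (2 * n * a) / n ^ 2 * r ^ n := by
    intro n
    rcases eq_or_ne n 0 with rfl | hn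
    · simp
    have hn' : (2 * n : ℝ) ≠ 0 := by positivity
    simp_rw [intervalIntegral.integral_const_mul, ← mul_assoc, mul_comm (n : ℝ) 2,
      integral_cos_mul_symm hn']
    field_simp
  have hbound : ∀ (n : ℕ) (x : ℝ),
      ‖(-1) ^ (n + 1) * r ^ n / n * Real.cos (n * (2 * x))‖ ≤ |r| ^ n := by
    intro n x
    simp only [norm_mul, norm_div, norm_pow, norm_neg, norm_one, one_pow, one_mul,
      Real.norm_eq_abs, Nat.abs_cast]
    calc |r| ^ n / n * |Real.cos (n * (2 * x))| ≤ |r| ^ n * 1 := by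
          rw [div_eq_mul_inv]
          gcongr
          exacts [mul_le_of_le_one_right (by positivity) (Nat.cast_inv_le_one n),
            Real.abs_cos_le_one _]
      _ = |r| ^ n := mul_one _
  simp_rw [← hterm]
  refine intervalIntegral.hasSum_integral_of_dominated_convergence (fun n _ => |r| ^ n)
    (fun n => by fun_prop) (fun n => ae_of_all _ fun x _ => hbound n x)
    (ae_of_all _ fun _ _ => summable_geometric_of_lt_one (abs_nonneg r) hr)
    intervalIntegrable_const
    (ae_of_all _ fun x _ => hasSum_log_norm_one_add_mul_exp hr (2 * x))

theorem tendsto_integral_log_norm_one_add_mul_exp {a : ℝ} (ha : |a| < π / 2) :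
    Tendsto (fun r : ℝ => ∫ x in -a..a, Real.log ‖1 + r * Complex.exp (↑(2 * x) * Complex.I)‖)
      (𝓝[<] 1) (𝓝 (∫ x in -a..a, Real.log (2 * Real.cos x))) := by
  have hcos : ∀ x ∈ Set.uIoc (-a) a, 0 < Real.cos a ∧ Real.cos a ≤ Real.cos x := by
    intro x hx
    rw [← Real.cos_abs a, ← Real.cos_abs x]
    exact ⟨Real.cos_pos_of_mem_Ioo ⟨by linarith [abs_nonneg a, Real.pi_pos], ha⟩,
      Real.cos_le_cos_of_nonneg_of_le_pi (abs_nonneg x) (by linarith [Real.pi_pos])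
        (abs_le_abs_of_mem_uIcc_neg (Set.uIoc_subset_uIcc hx))⟩
  refine intervalIntegral.tendsto_integral_filter_of_dominated_convergence
    (fun _ => Real.log 2 - Real.log (Real.cos a)) (Eventually.of_forall fun r => ?_) ?_
    intervalIntegrable_const (ae_of_all _ fun x hx => ?_)
  · exact (Real.measurable_log.comp (by fun_prop)).aestronglyMeasurable
  · filter_upwards [Ioo_mem_nhdsLT (show (0 : ℝ) < 1 by norm_num)] with r hr
    refine ae_of_all _ fun x hx => ?_
    obtain ⟨hca, hcax⟩ := hcos x hx
    rw [Real.norm_eq_abs]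
    refine abs_log_le_log_sub_log hca (Real.cos_le_one a) one_le_two ?_ ?_
    · calc Real.cos a ≤ |1 + r| * |Real.cos x| := by
            rw [abs_of_pos (by linarith [hr.1]), abs_of_pos (hca.trans_le hcax)]
            nlinarith [hr.1]
        _ ≤ _ := abs_one_add_mul_abs_cos_le_norm r x
    · calc _ ≤ ‖(1 : ℂ)‖ + ‖(r : ℂ) * Complex.exp (↑(2 * x) * Complex.I)‖ := norm_add_le _ _
        _ ≤ 2 := by
          rw [norm_mul, Complex.norm_exp_ofReal_mul_I, Complex.norm_real, Real.norm_eq_abs,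
            abs_of_pos hr.1, norm_one, mul_one]
          linarith [hr.2]
  · obtain ⟨hca, hcax⟩ := hcos x hx
    have hnorm : ‖1 + ((1 : ℝ) : ℂ) * Complex.exp (↑(2 * x) * Complex.I)‖ = 2 * Real.cos x := by
      rw [Complex.ofReal_one, one_mul, norm_one_add_exp, abs_of_pos (hca.trans_le hcax)]
    have hcont : ContinuousAt
        (fun r : ℝ => Real.log ‖1 + r * Complex.exp (↑(2 * x) * Complex.I)‖) 1 :=
      ContinuousAt.log (by fun_prop) (by rw [hnorm]; linarith)
    rw [← hnorm]
    exact hcont.tendsto.mono_left nhdsWithin_le_nhds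

theorem integral_log_two_mul_cos {a : ℝ} (ha : |a| < π / 2) :
    ∫ x in -a..a, Real.log (2 * Real.cos x) =
      ∑' n : ℕ, (-1) ^ n * Real.sin (2 * (n + 1) * a) / (n + 1) ^ 2 := by
  set c : ℕ → ℝ := fun n => (-1) ^ (n + 1) * Real.sin (2 * n * a) / n ^ 2
  have hc : Summable c := by
    refine (Real.summable_one_div_nat_pow.2 one_lt_two).of_norm_bounded fun n => ?_
    rw [norm_div, norm_mul, norm_pow, norm_neg, norm_one, one_pow, one_mul, norm_pow,
      Real.norm_eq_abs, Real.norm_eq_abs, Nat.abs_cast]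
    exact div_le_div_of_nonneg_right (Real.abs_sin_le_one _) (by positivity)
  have habel := Real.tendsto_tsum_powerSeries_nhdsWithin_lt hc.hasSum.tendsto_sum_nat
  have hpow : ∀ᶠ r in 𝓝[<] (1 : ℝ), ∑' n, c n * r ^ n =
      ∫ x in -a..a, Real.log ‖1 + r * Complex.exp (↑(2 * x) * Complex.I)‖ := by
    filter_upwards [Ioo_mem_nhdsLT (show (-1 : ℝ) < 1 by norm_num)] with r hr
    exact (hasSum_integral_log_norm_one_add_mul_exp (abs_lt.2 hr) a).tsum_eq
  rw [tendsto_nhds_unique (tendsto_integral_log_norm_one_add_mul_exp ha) (habel.congr' hpow),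
    hc.tsum_eq_zero_add]
  simp [c, pow_succ]

theorem integral_log_cos {a : ℝ} (ha : |a| < π / 2) :
    ∫ x in -a..a, Real.log (Real.cos x) =
      ∑' n : ℕ, (-1) ^ n * Real.sin (2 * (n + 1) * a) / (n + 1) ^ 2 - 2 * a * Real.log 2 := by
  have hint : IntervalIntegrable (fun x => Real.log (Real.cos x)) volume (-a) a :=
    (continuousOn_log_cos ha).intervalIntegrable
  have hsplit : ∫ x in -a..a, Real.log (2 * Real.cos x) =
      ∫ x in -a..a, (Real.log 2 + Real.log (Real.cos x)) :=
    intervalIntegral.integral_congr fun x hx =>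
      Real.log_mul two_ne_zero (cos_pos_of_mem_uIcc_neg ha hx).ne'
  rw [← integral_log_two_mul_cos ha, hsplit,
    intervalIntegral.integral_add intervalIntegrable_const hint, intervalIntegral.integral_const,
    smul_eq_mul]
  ring

theorem one_div_mul_sum_log_cos_eq_riemannSum (T : ℕ) :
    1 / (T : ℝ) * ∑ n ∈ Icc 1 T, Real.log (Real.cos ((2 * (n : ℝ) - T - 1) * π / (6 * T))) =
      3 / π * riemannSum (fun x => Real.log (Real.cos x)) (-(π / 6)) (π / 6) (1 / 2) T := by
  rcases eq_or_ne T 0 with rfl | hT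
  · simp [riemannSum]
  rw [riemannSum, ← mul_assoc, show 3 / π * ((π / 6 - -(π / 6)) / T) = 1 / T by field_simp; ring,
    ← Ico_add_one_right_eq_Icc, sum_Ico_eq_sum_range, add_tsub_cancel_right]
  refine congr_arg _ (sum_congr rfl fun i _ => ?_)
  push_cast
  congr 2
  field_simp
  ring

/-- Asymptotic evaluation of `B^{(3)}_{2T} = ∏_{n=1}^{T} cos((2n−T−1)π/(6T))`:
`lim_{T→∞} [−(1/T)·∑_{n=1}^{T} log cos((2n−T−1)π/(6T))]
  = log 2 − (3/π) ∑_{n≥1} (−1)^{n−1} sin(nπ/3)/n²`. -/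
theorem log_cos_product_asymptotics :
    Tendsto (fun T : ℕ => -(1 / (T : ℝ)) *
        ∑ n ∈ Finset.Icc 1 T, Real.log (Real.cos ((2 * (n : ℝ) - (T : ℝ) - 1) * π / (6 * T))))
      atTop
      (nhds (Real.log 2 -
        3 / π * ∑' n : ℕ, (-1 : ℝ) ^ n * Real.sin (((n : ℝ) + 1) * π / 3) / ((n : ℝ) + 1) ^ 2)) := by
  have hπ : |π / 6| < π / 2 := by rw [abs_of_pos (by positivity)]; linarith [Real.pi_pos]
  have hcont : ContinuousOn (fun x => Real.log (Real.cos x)) (Set.Icc (-(π / 6)) (π / 6)) := by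
    simpa only [Set.uIcc_of_le (neg_le_self (by positivity : (0 : ℝ) ≤ π / 6))]
      using continuousOn_log_cos hπ
  have hlim := (tendsto_riemannSum (neg_le_self (by positivity)) (θ := 1 / 2)
    ⟨by norm_num, by norm_num⟩ hcont).const_mul (-(3 / π))
  rw [integral_log_cos hπ] at hlim
  convert hlim using 2 with T
  · rw [neg_mul, neg_mul, one_div_mul_sum_log_cos_eq_riemannSum]
  · have harg : ∀ n : ℕ, 2 * ((n : ℝ) + 1) * (π / 6) = ((n : ℝ) + 1) * π / 3 := fun n => by ring
    simp_rw [harg]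
    field_simp
    ring
end
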